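/- arXiv:2106.14266 — 7 statements merged into one kernel-verified Lean document; each statement's English description precedes it below -/
import Mathlib

section
/- Let Q(x,y) be the negated Cayley-Menger polynomial of the five points of a four-sided cone K₁ with lateral edges p, q, r, s, base edges c, f, h, g and diagonals x, y (so Q(x,y) = x²y² - 2(s²+q²)x²y - 2(p²+r²)xy² + (s²-q²)²x² + (p²-r²)²y² + ...). If c² = q² + p² + (q/s)(g² - p² - s²) and f² = q² + r² + (q/s)(h² - r² - s²), then Q(x,y) is divisible by the linear factor (y - (q - s)²). -/
/-!
At `y = (q - s)²` the distances `|v₁v₃| = q`, `|v₁v₅| = s`, `|v₃v₅| = |q - s|` force `v₃` onto the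
line `v₁v₅`, with `s • v₃ = (s - q) • v₁ + q • v₅`. The hypotheses on `c²` and `f²` are exactly
Stewart's theorem for this collinear triple seen from `v₂` and from `v₄`, so the affine
dependency `(s - q, s, -q)` among `v₁, v₃, v₅` extends to a kernel vector of the Cayley–Menger
matrix for every `x`. Hence `Q(x, (q - s)²) = 0`, and a function vanishing on the line
`y = a` is a multiple of `y - a`.
-/

theorem exists_eq_sub_mul_of_forall_eq_zero {α K : Type*} [Field K] (F : α → K → K) (a : K)
    (hF : ∀ x, F x a = 0) : ∃ R : α → K → K, ∀ x y, F x y = (y - a) * R x y := by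
  refine ⟨fun x y => F x y / (y - a), fun x y => ?_⟩
  rcases eq_or_ne y a with rfl | hy
  · simp [hF]
  · rw [mul_div_cancel₀ _ (sub_ne_zero_of_ne hy)]

section ConeCayleyMenger

variable {K : Type*} [Field K]

/-- The Cayley–Menger matrix of the cone over the quadrilateral `cfhg`, in the vertex order
`v₁, …, v₅` with apex `v₁`. -/
def coneCayleyMenger (p q r s c f g h x y : K) : Matrix (Fin 6) (Fin 6) K :=
  !![0, 1, 1, 1, 1, 1;
     1, 0, p ^ 2, q ^ 2, r ^ 2, s ^ 2;
     1, p ^ 2, 0, c ^ 2, x, g ^ 2;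
     1, q ^ 2, c ^ 2, 0, f ^ 2, y;
     1, r ^ 2, x, f ^ 2, 0, h ^ 2;
     1, s ^ 2, g ^ 2, y, h ^ 2, 0]

variable {p q r s c f g h : K}

theorem coneCayleyMenger_mulVec_eq_zero (x : K) (hs : s ≠ 0)
    (hc2 : c ^ 2 = q ^ 2 + p ^ 2 + (q / s) * (g ^ 2 - p ^ 2 - s ^ 2))
    (hf2 : f ^ 2 = q ^ 2 + r ^ 2 + (q / s) * (h ^ 2 - r ^ 2 - s ^ 2)) :
    (coneCayleyMenger p q r s c f g h x ((q - s) ^ 2)).mulVec ![q * s * (s - q), q - s, 0, s, 0, -q]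
      = 0 := by
  ext i
  fin_cases i <;>
  · simp only [coneCayleyMenger, Matrix.mulVec, dotProduct, Fin.sum_univ_six, Matrix.of_apply,
      Matrix.cons_val', Matrix.cons_val, Matrix.cons_val_zero, Matrix.cons_val_one,
      Matrix.empty_val', Matrix.cons_val_fin_one, Pi.zero_apply, Fin.reduceFinMk, Fin.isValue,
      hc2, hf2]
    field_simp
    ring

theorem det_coneCayleyMenger_eq_zero (x : K) (hs : s ≠ 0)
    (hc2 : c ^ 2 = q ^ 2 + p ^ 2 + (q / s) * (g ^ 2 - p ^ 2 - s ^ 2))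
    (hf2 : f ^ 2 = q ^ 2 + r ^ 2 + (q / s) * (h ^ 2 - r ^ 2 - s ^ 2)) :
    (coneCayleyMenger p q r s c f g h x ((q - s) ^ 2)).det = 0 := by
  rw [← Matrix.exists_mulVec_eq_zero_iff]
  refine ⟨![q * s * (s - q), q - s, 0, s, 0, -q], fun hv => hs ?_,
    coneCayleyMenger_mulVec_eq_zero x hs hc2 hf2⟩
  simpa using congr_fun hv 3

end ConeCayleyMenger

theorem cayley_menger_linear_factor_plus_general
    (p q r s c f g h : ℝ)
    (hs : 0 < s)
    (hc2 : c ^ 2 = q ^ 2 + p ^ 2 + (q / s) * (g ^ 2 - p ^ 2 - s ^ 2))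
    (hf2 : f ^ 2 = q ^ 2 + r ^ 2 + (q / s) * (h ^ 2 - r ^ 2 - s ^ 2)) :
    ∃ R : ℝ → ℝ → ℝ, ∀ x y : ℝ,
      -(Matrix.det !![(0 : ℝ), 1, 1, 1, 1, 1;
                      1, 0, p ^ 2, q ^ 2, r ^ 2, s ^ 2;
                      1, p ^ 2, 0, c ^ 2, x, g ^ 2;
                      1, q ^ 2, c ^ 2, 0, f ^ 2, y;
                      1, r ^ 2, x, f ^ 2, 0, h ^ 2;
                      1, s ^ 2, g ^ 2, y, h ^ 2, 0]) =
        (y - (q - s) ^ 2) * R x y :=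
  exists_eq_sub_mul_of_forall_eq_zero (fun x y => -(coneCayleyMenger p q r s c f g h x y).det)
    ((q - s) ^ 2) fun x => by rw [det_coneCayleyMenger_eq_zero x hs.ne' hc2 hf2, neg_zero]

theorem cayley_menger_linear_factor_plus
    (p q r s c f g h : ℝ)
    (hp : 0 < p) (hq : 0 < q) (hr : 0 < r) (hs : 0 < s)
    (hc : 0 < c) (hf : 0 < f) (hg : 0 < g) (hh : 0 < h)
    (hc2 : c ^ 2 = q ^ 2 + p ^ 2 + (q / s) * (g ^ 2 - p ^ 2 - s ^ 2))
    (hf2 : f ^ 2 = q ^ 2 + r ^ 2 + (q / s) * (h ^ 2 - r ^ 2 - s ^ 2)) :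
    ∃ R : ℝ → ℝ → ℝ, ∀ x y : ℝ,
      -(Matrix.det !![(0 : ℝ), 1, 1, 1, 1, 1;
                      1, 0, p ^ 2, q ^ 2, r ^ 2, s ^ 2;
                      1, p ^ 2, 0, c ^ 2, x, g ^ 2;
                      1, q ^ 2, c ^ 2, 0, f ^ 2, y;
                      1, r ^ 2, x, f ^ 2, 0, h ^ 2;
                      1, s ^ 2, g ^ 2, y, h ^ 2, 0]) =
        (y - (q - s) ^ 2) * R x y :=
  cayley_menger_linear_factor_plus_general p q r s c f g h hs hc2 hf2
end

section
/- With the same Cayley-Menger polynomial Q(x,y), if c² = q² + p² - (q/s)(g² - p² - s²) and f² = q² + r² - (q/s)(h² - r² - s²), then Q(x,y) is divisible by (y - (q + s)²). -/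
/-!
When `y = (q + s)²` the apex `O` lies on the segment between the base vertices `Q` and `S`
(at distance `q` from `Q` and `s` from `S`), so `s • Q + q • S - (q + s) • O = 0` is an affine
dependence, and the two hypotheses on `c²` and `f²` are exactly Stewart's theorem for the cevians
`PO` and `RO` of the triangles `PQS` and `RQS`. Its coefficients `(-(q + s), 0, s, 0, q)` on
`(O, P, Q, R, S)`, preceded by `-∑ λᵢ |OXᵢ|² = -q s (q + s)`, form a kernel vector of the
Cayley–Menger matrix, so the determinant vanishes at `y = (q + s)²` for every `x`.
-/

open Matrix

theorem exists_eq_sub_mul_of_apply_eq_zero {α K : Type*} [Field K] (F : α → K → K) (a : K)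
    (h : ∀ x, F x a = 0) : ∃ R : α → K → K, ∀ x y, F x y = (y - a) * R x y := by
  refine ⟨fun x y => F x y / (y - a), fun x y => ?_⟩
  rcases eq_or_ne y a with rfl | hy
  · simp [h]
  · rw [mul_div_cancel₀ _ (sub_ne_zero.mpr hy)]

def coneCayleyMengerMatrix (p q r s c f g h x y : ℝ) : Matrix (Fin 6) (Fin 6) ℝ :=
  !![(0 : ℝ), 1, 1, 1, 1, 1;
     1, 0, p ^ 2, q ^ 2, r ^ 2, s ^ 2;
     1, p ^ 2, 0, c ^ 2, x, g ^ 2;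
     1, q ^ 2, c ^ 2, 0, f ^ 2, y;
     1, r ^ 2, x, f ^ 2, 0, h ^ 2;
     1, s ^ 2, g ^ 2, y, h ^ 2, 0]

theorem coneCayleyMengerMatrix_mulVec_eq_zero {p q r s c f g h : ℝ} (x : ℝ)
    (hc : s * c ^ 2 = s * q ^ 2 + s * p ^ 2 - q * (g ^ 2 - p ^ 2 - s ^ 2))
    (hf : s * f ^ 2 = s * q ^ 2 + s * r ^ 2 - q * (h ^ 2 - r ^ 2 - s ^ 2)) :
    coneCayleyMengerMatrix p q r s c f g h x ((q + s) ^ 2) *ᵥ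
      ![-(q * s * (q + s)), -(q + s), 0, s, 0, q] = 0 := by
  ext i
  fin_cases i <;>
    simp only [coneCayleyMengerMatrix, mulVec, dotProduct, Fin.sum_univ_six, of_apply, Pi.zero_apply,
      Fin.zero_eta, Fin.mk_one, Fin.reduceFinMk, cons_val_zero, cons_val_one, cons_val]
  · ring
  · ring
  · linear_combination hc
  · ring
  · linear_combination hf
  · ring

theorem coneCayleyMengerMatrix_det_eq_zero {p q r s c f g h : ℝ} (x : ℝ) (hs : s ≠ 0)
    (hc : s * c ^ 2 = s * q ^ 2 + s * p ^ 2 - q * (g ^ 2 - p ^ 2 - s ^ 2))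
    (hf : s * f ^ 2 = s * q ^ 2 + s * r ^ 2 - q * (h ^ 2 - r ^ 2 - s ^ 2)) :
    (coneCayleyMengerMatrix p q r s c f g h x ((q + s) ^ 2)).det = 0 :=
  exists_mulVec_eq_zero_iff.mp
    ⟨_, fun h0 => hs (congrFun h0 3), coneCayleyMengerMatrix_mulVec_eq_zero x hc hf⟩

theorem cayley_menger_linear_factor_minus_general
    (p q r s c f g h : ℝ)
    (hs : 0 < s)
    (hc2 : c ^ 2 = q ^ 2 + p ^ 2 - (q / s) * (g ^ 2 - p ^ 2 - s ^ 2))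
    (hf2 : f ^ 2 = q ^ 2 + r ^ 2 - (q / s) * (h ^ 2 - r ^ 2 - s ^ 2)) :
    ∃ R : ℝ → ℝ → ℝ, ∀ x y : ℝ,
      -(Matrix.det !![(0 : ℝ), 1, 1, 1, 1, 1;
                      1, 0, p ^ 2, q ^ 2, r ^ 2, s ^ 2;
                      1, p ^ 2, 0, c ^ 2, x, g ^ 2;
                      1, q ^ 2, c ^ 2, 0, f ^ 2, y;
                      1, r ^ 2, x, f ^ 2, 0, h ^ 2;
                      1, s ^ 2, g ^ 2, y, h ^ 2, 0]) =
        (y - (q + s) ^ 2) * R x y := by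
  have hc : s * c ^ 2 = s * q ^ 2 + s * p ^ 2 - q * (g ^ 2 - p ^ 2 - s ^ 2) := by
    rw [hc2]; field_simp
  have hf : s * f ^ 2 = s * q ^ 2 + s * r ^ 2 - q * (h ^ 2 - r ^ 2 - s ^ 2) := by
    rw [hf2]; field_simp
  refine exists_eq_sub_mul_of_apply_eq_zero
    (fun x y => -(coneCayleyMengerMatrix p q r s c f g h x y).det) _ fun x => ?_
  rw [coneCayleyMengerMatrix_det_eq_zero x hs.ne' hc hf, neg_zero]

theorem cayley_menger_linear_factor_minus
    (p q r s c f g h : ℝ)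
    (hp : 0 < p) (hq : 0 < q) (hr : 0 < r) (hs : 0 < s)
    (hc : 0 < c) (hf : 0 < f) (hg : 0 < g) (hh : 0 < h)
    (hc2 : c ^ 2 = q ^ 2 + p ^ 2 - (q / s) * (g ^ 2 - p ^ 2 - s ^ 2))
    (hf2 : f ^ 2 = q ^ 2 + r ^ 2 - (q / s) * (h ^ 2 - r ^ 2 - s ^ 2)) :
    ∃ R : ℝ → ℝ → ℝ, ∀ x y : ℝ,
      -(Matrix.det !![(0 : ℝ), 1, 1, 1, 1, 1;
                      1, 0, p ^ 2, q ^ 2, r ^ 2, s ^ 2;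
                      1, p ^ 2, 0, c ^ 2, x, g ^ 2;
                      1, q ^ 2, c ^ 2, 0, f ^ 2, y;
                      1, r ^ 2, x, f ^ 2, 0, h ^ 2;
                      1, s ^ 2, g ^ 2, y, h ^ 2, 0]) =
        (y - (q + s) ^ 2) * R x y :=
  cayley_menger_linear_factor_minus_general p q r s c f g h hs hc2 hf2
end

section
/- With the same Cayley-Menger polynomial Q(x,y) (for lateral edges p,q,r,s, base edges c,f,h,g, squared diagonals x,y), if c² = q² + p² + (pq/(sr))(h² - r² - s²) and f² = q² + r² + (qr/(ps))(g² - p² - s²), then Q(x,y) factors as the product of two polynomials of bidegree (1,1): Q(x,y) = [xy - (s+q)²x - (p+r)²y + ...]·[xy - (s-q)²x - (p-r)²y + ...], where each factor is of the form xy + Ax + By + C with appropriate constants. -/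
/-!
Subtracting the apex row and column turns the Cayley–Menger determinant of the apex and the
four base vertices into minus the determinant of the 4 × 4 matrix `G i j = aᵢ + aⱼ - dᵢⱼ`,
where the `aᵢ` are the squared lateral edges and `dᵢⱼ` the squared base distances.

The two hypotheses say that opposite lateral faces have equal apex angles:
`c² = p² + q² + pqα`, `h² = r² + s² + rsα` and
`f² = q² + r² + qrβ`, `g² = p² + s² + psβ`.
After conjugating `G` by `diag (r, s, p, q)` it commutes with the involution swapping the
vertices `A ↔ C` and `B ↔ D` simultaneously, hence splits into two 2 × 2 blocks on its `±1`
eigenspaces; up to the factor `pqrs`, the determinants of these blocks are the two bilinear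
factors.
-/

open Matrix

theorem det_fin_four_of_swap_symm {R : Type*} [CommRing R] (a b c d e f : R) :
    det !![a, b, c, d; b, e, d, f; c, d, a, b; d, f, b, e] =
      ((a + c) * (e + f) - (b + d) ^ 2) * ((a - c) * (e - f) - (b - d) ^ 2) := by
  simp only [det_succ_row_zero, det_unique, Fin.sum_univ_succ, Finset.univ_unique,
    Finset.sum_singleton, submatrix_apply, Fin.succAbove, Fin.reduceSucc, Fin.reduceCastSucc,
    Fin.reduceLT, Fin.castSucc_zero, Fin.succ_zero_eq_one, Fin.succ_one_eq_two,
    Fin.default_eq_zero, ↓reduceIte, Fin.val_succ, Fin.val_zero, of_apply, cons_val', cons_val,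
    cons_val_fin_one, Fin.isValue]
  ring

theorem det_cayleyMenger_five_eq_neg_det {R : Type*} [CommRing R]
    (a₁ a₂ a₃ a₄ d₁₂ d₁₃ d₁₄ d₂₃ d₂₄ d₃₄ : R) :
    det !![0, 1, 1, 1, 1, 1;
           1, 0, a₁, a₂, a₃, a₄;
           1, a₁, 0, d₁₂, d₁₃, d₁₄;
           1, a₂, d₁₂, 0, d₂₃, d₂₄;
           1, a₃, d₁₃, d₂₃, 0, d₃₄;
           1, a₄, d₁₄, d₂₄, d₃₄, 0] =
      -det !![2 * a₁, a₁ + a₂ - d₁₂, a₁ + a₃ - d₁₃, a₁ + a₄ - d₁₄;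
              a₁ + a₂ - d₁₂, 2 * a₂, a₂ + a₃ - d₂₃, a₂ + a₄ - d₂₄;
              a₁ + a₃ - d₁₃, a₂ + a₃ - d₂₃, 2 * a₃, a₃ + a₄ - d₃₄;
              a₁ + a₄ - d₁₄, a₂ + a₄ - d₂₄, a₃ + a₄ - d₃₄, 2 * a₄] := by
  simp only [det_succ_row_zero, det_unique, Fin.sum_univ_succ, Finset.univ_unique,
    Finset.sum_singleton, submatrix_apply, Fin.succAbove, Fin.reduceSucc, Fin.reduceCastSucc,
    Fin.reduceLT, Fin.castSucc_zero, Fin.succ_zero_eq_one, Fin.succ_one_eq_two,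
    Fin.default_eq_zero, ↓reduceIte, Fin.val_succ, Fin.val_zero, of_apply, cons_val', cons_val,
    cons_val_fin_one, Fin.isValue]
  ring

section Pyramid

variable {R : Type*} [CommRing R] [IsDomain R] {p q r s : R}

theorem det_pyramid_gram (hp : p ≠ 0) (hq : q ≠ 0) (hr : r ≠ 0) (hs : s ≠ 0)
    (α β x y : R) :
    det !![2 * p ^ 2, -(p * q * α), p ^ 2 + r ^ 2 - x, -(p * s * β);
           -(p * q * α), 2 * q ^ 2, -(q * r * β), q ^ 2 + s ^ 2 - y;
           p ^ 2 + r ^ 2 - x, -(q * r * β), 2 * r ^ 2, -(r * s * α);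
           -(p * s * β), q ^ 2 + s ^ 2 - y, -(r * s * α), 2 * s ^ 2] =
      (x * y - (s + q) ^ 2 * x - (p + r) ^ 2 * y +
          ((p + r) ^ 2 * (q + s) ^ 2 - p * q * r * s * (α + β) ^ 2)) *
        (x * y - (s - q) ^ 2 * x - (p - r) ^ 2 * y +
          ((p - r) ^ 2 * (q - s) ^ 2 - p * q * r * s * (α - β) ^ 2)) := by
  set G := !![2 * p ^ 2, -(p * q * α), p ^ 2 + r ^ 2 - x, -(p * s * β);
              -(p * q * α), 2 * q ^ 2, -(q * r * β), q ^ 2 + s ^ 2 - y;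
              p ^ 2 + r ^ 2 - x, -(q * r * β), 2 * r ^ 2, -(r * s * α);
              -(p * s * β), q ^ 2 + s ^ 2 - y, -(r * s * α), 2 * s ^ 2]
  let D : Matrix (Fin 4) (Fin 4) R := diagonal ![r, s, p, q]
  apply mul_left_cancel₀ (pow_ne_zero 2 (by simp [hp, hq, hr, hs]) : (p * q * r * s) ^ 2 ≠ 0)
  calc (p * q * r * s) ^ 2 * det G = det (D * G * D) := by
        simp only [det_mul, D, det_diagonal, Fin.prod_univ_four, Fin.isValue, cons_val_zero,
          cons_val_one, cons_val]
        ring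
    _ = det !![2 * p ^ 2 * r ^ 2, -(p * q * r * s * α), p * r * (p ^ 2 + r ^ 2 - x),
                -(p * q * r * s * β);
               -(p * q * r * s * α), 2 * q ^ 2 * s ^ 2, -(p * q * r * s * β),
                q * s * (q ^ 2 + s ^ 2 - y);
               p * r * (p ^ 2 + r ^ 2 - x), -(p * q * r * s * β), 2 * p ^ 2 * r ^ 2,
                -(p * q * r * s * α);
               -(p * q * r * s * β), q * s * (q ^ 2 + s ^ 2 - y), -(p * q * r * s * α),
                2 * q ^ 2 * s ^ 2] := by
        congr 1
        ext i j
        fin_cases i <;> fin_cases j <;>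
          simp only [D, G, diagonal_mul, mul_diagonal, of_apply, cons_val', cons_val,
            cons_val_zero, cons_val_one, cons_val_fin_one, Fin.isValue, Fin.zero_eta, Fin.mk_one,
            Fin.reduceFinMk] <;>
          ring
    _ = _ := by
        rw [det_fin_four_of_swap_symm]
        ring

theorem neg_det_cayleyMenger_pyramid (hp : p ≠ 0) (hq : q ≠ 0) (hr : r ≠ 0) (hs : s ≠ 0)
    (α β x y : R) :
    -det !![0, 1, 1, 1, 1, 1;
            1, 0, p ^ 2, q ^ 2, r ^ 2, s ^ 2;
            1, p ^ 2, 0, p ^ 2 + q ^ 2 + p * q * α, x, p ^ 2 + s ^ 2 + p * s * β;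
            1, q ^ 2, p ^ 2 + q ^ 2 + p * q * α, 0, q ^ 2 + r ^ 2 + q * r * β, y;
            1, r ^ 2, x, q ^ 2 + r ^ 2 + q * r * β, 0, r ^ 2 + s ^ 2 + r * s * α;
            1, s ^ 2, p ^ 2 + s ^ 2 + p * s * β, y, r ^ 2 + s ^ 2 + r * s * α, 0] =
      (x * y - (s + q) ^ 2 * x - (p + r) ^ 2 * y +
          ((p + r) ^ 2 * (q + s) ^ 2 - p * q * r * s * (α + β) ^ 2)) *
        (x * y - (s - q) ^ 2 * x - (p - r) ^ 2 * y +
          ((p - r) ^ 2 * (q - s) ^ 2 - p * q * r * s * (α - β) ^ 2)) := by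
  rw [det_cayleyMenger_five_eq_neg_det, neg_neg, ← det_pyramid_gram hp hq hr hs]
  congr 1
  ext i j
  fin_cases i <;> fin_cases j <;> simp

end Pyramid

theorem cayley_menger_bilinear_factorization_general
    (p q r s c f g h : ℝ)
    (hp : 0 < p) (hq : 0 < q) (hr : 0 < r) (hs : 0 < s)
    (hc2 : c ^ 2 = q ^ 2 + p ^ 2 + (p * q / (s * r)) * (h ^ 2 - r ^ 2 - s ^ 2))
    (hf2 : f ^ 2 = q ^ 2 + r ^ 2 + (q * r / (p * s)) * (g ^ 2 - p ^ 2 - s ^ 2)) :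
    ∃ C₁ C₂ : ℝ, ∀ x y : ℝ,
      -(Matrix.det !![(0 : ℝ), 1, 1, 1, 1, 1;
                      1, 0, p ^ 2, q ^ 2, r ^ 2, s ^ 2;
                      1, p ^ 2, 0, c ^ 2, x, g ^ 2;
                      1, q ^ 2, c ^ 2, 0, f ^ 2, y;
                      1, r ^ 2, x, f ^ 2, 0, h ^ 2;
                      1, s ^ 2, g ^ 2, y, h ^ 2, 0]) =
        (x * y - (s + q) ^ 2 * x - (p + r) ^ 2 * y + C₁) *
        (x * y - (s - q) ^ 2 * x - (p - r) ^ 2 * y + C₂) := by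
  obtain ⟨α, hα⟩ : ∃ α, h ^ 2 = r ^ 2 + s ^ 2 + r * s * α :=
    ⟨(h ^ 2 - r ^ 2 - s ^ 2) / (r * s), by field_simp; ring⟩
  obtain ⟨β, hβ⟩ : ∃ β, g ^ 2 = p ^ 2 + s ^ 2 + p * s * β :=
    ⟨(g ^ 2 - p ^ 2 - s ^ 2) / (p * s), by field_simp; ring⟩
  have hc2' : c ^ 2 = p ^ 2 + q ^ 2 + p * q * α := by
    rw [hc2, hα]
    field_simp
    ring
  have hf2' : f ^ 2 = q ^ 2 + r ^ 2 + q * r * β := by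
    rw [hf2, hβ]
    field_simp
    ring
  refine ⟨(p + r) ^ 2 * (q + s) ^ 2 - p * q * r * s * (α + β) ^ 2,
    (p - r) ^ 2 * (q - s) ^ 2 - p * q * r * s * (α - β) ^ 2, fun x y => ?_⟩
  rw [hc2', hf2', hα, hβ]
  exact neg_det_cayleyMenger_pyramid hp.ne' hq.ne' hr.ne' hs.ne' α β x y

theorem cayley_menger_bilinear_factorization
    (p q r s c f g h : ℝ)
    (hp : 0 < p) (hq : 0 < q) (hr : 0 < r) (hs : 0 < s)
    (hc : 0 < c) (hf : 0 < f) (hg : 0 < g) (hh : 0 < h)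
    (hc2 : c ^ 2 = q ^ 2 + p ^ 2 + (p * q / (s * r)) * (h ^ 2 - r ^ 2 - s ^ 2))
    (hf2 : f ^ 2 = q ^ 2 + r ^ 2 + (q * r / (p * s)) * (g ^ 2 - p ^ 2 - s ^ 2)) :
    ∃ C₁ C₂ : ℝ, ∀ x y : ℝ,
      -(Matrix.det !![(0 : ℝ), 1, 1, 1, 1, 1;
                      1, 0, p ^ 2, q ^ 2, r ^ 2, s ^ 2;
                      1, p ^ 2, 0, c ^ 2, x, g ^ 2;
                      1, q ^ 2, c ^ 2, 0, f ^ 2, y;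
                      1, r ^ 2, x, f ^ 2, 0, h ^ 2;
                      1, s ^ 2, g ^ 2, y, h ^ 2, 0]) =
        (x * y - (s + q) ^ 2 * x - (p + r) ^ 2 * y + C₁) *
        (x * y - (s - q) ^ 2 * x - (p - r) ^ 2 * y + C₂) :=
  cayley_menger_bilinear_factorization_general p q r s c f g h hp hq hr hs hc2 hf2
end

section
/- The discriminant Δ(x) of Q(x,y) viewed as a quadratic polynomial in y equals 16·P₁(x)·P₂(x), where P₁(x) = s²x² + (-g²r² + s⁴ - s²h² - p²s² + p²r² - p²h² + g²h² - g²s² - s²r²)x + p⁴h² - p²h²g² + r²h²s² - p²h²s² + r⁴g² - p²r²h² + p²g²s² + p²h⁴ - p²g²r² + r²g⁴ - r²g²h² - r²g²s² and P₂(x) = q²x² + (-r²q² - q²f² - r²c² - p²f² + c²f² + q⁴ - c²q² - q²p² + p²r²)x + r⁴c² - r²c²p² - f²r²c² - p²f²c² - p²f²r² - c²q²r² - p²f²q² + r²c⁴ + q²f²r² + p⁴f² + p²f⁴ + q²c²p². -/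
/-!
Write `O` for the apex and `A, B, C, D` for the base vertices, so that `p, q, r, s` are the lateral
edges `OA, …, OD`, `c, f, h, g` are `AB, BC, CD, DA`, and `x = AC²`, `y = BD²`. Taking the Schur
complement of the border block `!![0, 1; 1, 0]` turns `Q(x, y)` into the determinant of twice the
Gram matrix of the vectors `OA, …, OD`, in which `y` occurs only through the entry `q² + s² - y`.
For a symmetric `4 × 4` matrix `M`, the Desnanot–Jacobi identity
`det M · det M_{BD,BD} = det M_{BB} · det M_{DD} - (det M_{BD})²` shows that the discriminant of
`det M` in its `BD` entry is `4 · det M_{BB} · det M_{DD}`. Here these principal minors are the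
doubled Gram determinants of the tetrahedra `OACD` and `OABC`, namely `-2 P₁` and `-2 P₂`.
-/

open Matrix

section

variable {R : Type*} [CommRing R]

theorem det_fin_four_of (a b c d e f g h i j k l m n o p : R) :
    det !![a, b, c, d; e, f, g, h; i, j, k, l; m, n, o, p] =
      a * det !![f, g, h; j, k, l; n, o, p] - b * det !![e, g, h; i, k, l; m, o, p] +
        c * det !![e, f, h; i, j, l; m, n, p] - d * det !![e, f, g; i, j, k; m, n, o] := by
  rw [det_succ_row_zero, Fin.sum_univ_four]
  simp only [det_fin_three, submatrix_apply, of_apply, cons_val', cons_val, cons_val_fin_one,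
    Fin.succAbove, Fin.reduceSucc, Fin.reduceCastSucc, Fin.reduceLT, ↓reduceIte, Fin.coe_ofNat_eq_mod]
  ring

section CayleyMenger

variable {ι : Type*} [Fintype ι] [DecidableEq ι]

/-- The Cayley–Menger matrix of an apex and base points indexed by `ι`: the two indices of the
`Fin 2` block are the border of ones and the apex, `a` holds the squared distances from the apex and
`D` those between base points. -/
def cayleyMengerMatrix (a : ι → R) (D : Matrix ι ι R) : Matrix (Fin 2 ⊕ ι) (Fin 2 ⊕ ι) R :=
  fromBlocks !![0, 1; 1, 0] (of fun k j => ![1, a j] k) (of fun i k => ![1, a i] k) D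

/-- By polarization, twice the Gram matrix of the vectors from the apex to the base points. -/
def apexGram (a : ι → R) (D : Matrix ι ι R) : Matrix ι ι R :=
  of fun i j => a i + a j - D i j

theorem det_cayleyMengerMatrix (a : ι → R) (D : Matrix ι ι R) :
    (cayleyMengerMatrix a D).det = -((-1) ^ Fintype.card ι * (apexGram a D).det) := by
  have hswap : !![(0 : R), 1; 1, 0] * !![0, 1; 1, 0] = 1 := by simp [one_fin_two]
  let : Invertible !![(0 : R), 1; 1, 0] := ⟨!![0, 1; 1, 0], hswap, hswap⟩
  have hSchur : D - of (fun i k => ![1, a i] k) * ⅟!![(0 : R), 1; 1, 0] *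
      of (fun k j => ![1, a j] k) = -apexGram a D := by
    ext i j
    simp [apexGram, show ⅟!![(0 : R), 1; 1, 0] = !![0, 1; 1, 0] from rfl, mul_apply,
      Fin.sum_univ_two]
  rw [cayleyMengerMatrix, det_fromBlocks₁₁, hSchur, det_neg, det_fin_two_of]
  ring

end CayleyMenger

theorem det_cayleyMenger_fin_six (a₀ a₁ a₂ a₃ d₀₁ d₀₂ d₀₃ d₁₂ d₁₃ d₂₃ : R) :
    det !![0, 1, 1, 1, 1, 1;
           1, 0, a₀, a₁, a₂, a₃;
           1, a₀, 0, d₀₁, d₀₂, d₀₃;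
           1, a₁, d₀₁, 0, d₁₂, d₁₃;
           1, a₂, d₀₂, d₁₂, 0, d₂₃;
           1, a₃, d₀₃, d₁₃, d₂₃, 0] =
      -det !![2 * a₀, a₀ + a₁ - d₀₁, a₀ + a₂ - d₀₂, a₀ + a₃ - d₀₃;
              a₀ + a₁ - d₀₁, 2 * a₁, a₁ + a₂ - d₁₂, a₁ + a₃ - d₁₃;
              a₀ + a₂ - d₀₂, a₁ + a₂ - d₁₂, 2 * a₂, a₂ + a₃ - d₂₃;
              a₀ + a₃ - d₀₃, a₁ + a₃ - d₁₃, a₂ + a₃ - d₂₃, 2 * a₃] := by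
  have h := det_cayleyMengerMatrix ![a₀, a₁, a₂, a₃]
    !![0, d₀₁, d₀₂, d₀₃; d₀₁, 0, d₁₂, d₁₃; d₀₂, d₁₂, 0, d₂₃; d₀₃, d₁₃, d₂₃, 0]
  rw [← det_reindex_self finSumFinEquiv] at h
  convert h using 1
  · congr 1
    ext i j
    fin_cases i <;> fin_cases j <;> rfl
  · rw [Fintype.card_fin, Even.neg_one_pow (by decide), one_mul]
    congr 2
    ext i j
    fin_cases i <;> fin_cases j <;> simp [apexGram, two_mul, add_comm]

theorem exists_discrim_det_symm_fin_four (m₀₀ m₀₁ m₀₂ m₀₃ m₁₁ m₁₂ m₂₂ m₂₃ m₃₃ : R) :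
    ∃ A₂ A₁ A₀ : R,
      (∀ t, det !![m₀₀, m₀₁, m₀₂, m₀₃; m₀₁, m₁₁, m₁₂, t; m₀₂, m₁₂, m₂₂, m₂₃; m₀₃, t, m₂₃, m₃₃] =
        A₂ * t ^ 2 + A₁ * t + A₀) ∧
      discrim A₂ A₁ A₀ =
        4 * det !![m₀₀, m₀₂, m₀₃; m₀₂, m₂₂, m₂₃; m₀₃, m₂₃, m₃₃] *
          det !![m₀₀, m₀₁, m₀₂; m₀₁, m₁₁, m₁₂; m₀₂, m₁₂, m₂₂] := by
  -- the coefficients are minors of the matrix at `t = 0`, as in the Desnanot–Jacobi identity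
  refine ⟨-det !![m₀₀, m₀₂; m₀₂, m₂₂], 2 * det !![m₀₀, m₀₁, m₀₂; m₀₂, m₁₂, m₂₂; m₀₃, 0, m₂₃],
    det !![m₀₀, m₀₁, m₀₂, m₀₃; m₀₁, m₁₁, m₁₂, 0; m₀₂, m₁₂, m₂₂, m₂₃; m₀₃, 0, m₂₃, m₃₃],
    fun t => ?_, ?_⟩
  · simp only [det_fin_four_of, det_fin_three, det_fin_two_of, of_apply, cons_val', cons_val_zero,
      cons_val_fin_one, cons_val_one, cons_val]
    ring
  · simp only [discrim, det_fin_four_of, det_fin_three, det_fin_two_of, of_apply, cons_val',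
      cons_val_zero, cons_val_fin_one, cons_val_one, cons_val]
    ring

/-- The coefficients of `a * t ^ 2 + b * t + c` as a polynomial in `y`, where `t = k - y`. -/
theorem discrim_comp_sub (a b c k : R) :
    discrim a (-(2 * a * k + b)) (a * k ^ 2 + b * k + c) = discrim a b c := by
  unfold discrim
  ring

end

theorem cayley_menger_discriminant_factorization_general
    (p q r s c f g h : ℝ) :
    ∃ A₂ A₁ A₀ : ℝ → ℝ,
      (∀ x y : ℝ,
        -(Matrix.det !![(0 : ℝ), 1, 1, 1, 1, 1;
                        1, 0, p ^ 2, q ^ 2, r ^ 2, s ^ 2;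
                        1, p ^ 2, 0, c ^ 2, x, g ^ 2;
                        1, q ^ 2, c ^ 2, 0, f ^ 2, y;
                        1, r ^ 2, x, f ^ 2, 0, h ^ 2;
                        1, s ^ 2, g ^ 2, y, h ^ 2, 0]) =
          A₂ x * y ^ 2 + A₁ x * y + A₀ x) ∧
      (∀ x : ℝ, (A₁ x) ^ 2 - 4 * A₂ x * A₀ x =
        16 *
        (s ^ 2 * x ^ 2 +
          (-g ^ 2 * r ^ 2 + s ^ 4 - s ^ 2 * h ^ 2 - p ^ 2 * s ^ 2 + p ^ 2 * r ^ 2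
            - p ^ 2 * h ^ 2 + g ^ 2 * h ^ 2 - g ^ 2 * s ^ 2 - s ^ 2 * r ^ 2) * x +
          (p ^ 4 * h ^ 2 - p ^ 2 * h ^ 2 * g ^ 2 + r ^ 2 * h ^ 2 * s ^ 2
            - p ^ 2 * h ^ 2 * s ^ 2 + r ^ 4 * g ^ 2 - p ^ 2 * r ^ 2 * h ^ 2
            + p ^ 2 * g ^ 2 * s ^ 2 + p ^ 2 * h ^ 4 - p ^ 2 * g ^ 2 * r ^ 2
            + r ^ 2 * g ^ 4 - r ^ 2 * g ^ 2 * h ^ 2 - r ^ 2 * g ^ 2 * s ^ 2)) *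
        (q ^ 2 * x ^ 2 +
          (-r ^ 2 * q ^ 2 - q ^ 2 * f ^ 2 - r ^ 2 * c ^ 2 - p ^ 2 * f ^ 2
            + c ^ 2 * f ^ 2 + q ^ 4 - c ^ 2 * q ^ 2 - q ^ 2 * p ^ 2 + p ^ 2 * r ^ 2) * x +
          (r ^ 4 * c ^ 2 - r ^ 2 * c ^ 2 * p ^ 2 - f ^ 2 * r ^ 2 * c ^ 2
            - p ^ 2 * f ^ 2 * c ^ 2 - p ^ 2 * f ^ 2 * r ^ 2 - c ^ 2 * q ^ 2 * r ^ 2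
            - p ^ 2 * f ^ 2 * q ^ 2 + r ^ 2 * c ^ 4 + q ^ 2 * f ^ 2 * r ^ 2
            + p ^ 4 * f ^ 2 + p ^ 2 * f ^ 4 + q ^ 2 * c ^ 2 * p ^ 2))) := by
  choose A₂ A₁ A₀ hQ hΔ using fun x : ℝ => (exists_discrim_det_symm_fin_four
    (2 * p ^ 2) (p ^ 2 + q ^ 2 - c ^ 2) (p ^ 2 + r ^ 2 - x) (p ^ 2 + s ^ 2 - g ^ 2)
    (2 * q ^ 2) (q ^ 2 + r ^ 2 - f ^ 2) (2 * r ^ 2) (r ^ 2 + s ^ 2 - h ^ 2) (2 * s ^ 2))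
  refine ⟨A₂, fun x => -(2 * A₂ x * (q ^ 2 + s ^ 2) + A₁ x),
    fun x => A₂ x * (q ^ 2 + s ^ 2) ^ 2 + A₁ x * (q ^ 2 + s ^ 2) + A₀ x, fun x y => ?_, fun x => ?_⟩
  · rw [det_cayleyMenger_fin_six, neg_neg, hQ]
    ring
  · change discrim _ _ _ = _
    rw [discrim_comp_sub, hΔ]
    simp only [det_fin_three, of_apply, cons_val', cons_val_zero, cons_val_fin_one, cons_val_one,
      cons_val]
    ring

theorem cayley_menger_discriminant_factorization
    (p q r s c f g h : ℝ)
    (hp : 0 < p) (hq : 0 < q) (hr : 0 < r) (hs : 0 < s)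
    (hc : 0 < c) (hf : 0 < f) (hg : 0 < g) (hh : 0 < h) :
    ∃ A₂ A₁ A₀ : ℝ → ℝ,
      (∀ x y : ℝ,
        -(Matrix.det !![(0 : ℝ), 1, 1, 1, 1, 1;
                        1, 0, p ^ 2, q ^ 2, r ^ 2, s ^ 2;
                        1, p ^ 2, 0, c ^ 2, x, g ^ 2;
                        1, q ^ 2, c ^ 2, 0, f ^ 2, y;
                        1, r ^ 2, x, f ^ 2, 0, h ^ 2;
                        1, s ^ 2, g ^ 2, y, h ^ 2, 0]) =
          A₂ x * y ^ 2 + A₁ x * y + A₀ x) ∧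
      (∀ x : ℝ, (A₁ x) ^ 2 - 4 * A₂ x * A₀ x =
        16 *
        (s ^ 2 * x ^ 2 +
          (-g ^ 2 * r ^ 2 + s ^ 4 - s ^ 2 * h ^ 2 - p ^ 2 * s ^ 2 + p ^ 2 * r ^ 2
            - p ^ 2 * h ^ 2 + g ^ 2 * h ^ 2 - g ^ 2 * s ^ 2 - s ^ 2 * r ^ 2) * x +
          (p ^ 4 * h ^ 2 - p ^ 2 * h ^ 2 * g ^ 2 + r ^ 2 * h ^ 2 * s ^ 2
            - p ^ 2 * h ^ 2 * s ^ 2 + r ^ 4 * g ^ 2 - p ^ 2 * r ^ 2 * h ^ 2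
            + p ^ 2 * g ^ 2 * s ^ 2 + p ^ 2 * h ^ 4 - p ^ 2 * g ^ 2 * r ^ 2
            + r ^ 2 * g ^ 4 - r ^ 2 * g ^ 2 * h ^ 2 - r ^ 2 * g ^ 2 * s ^ 2)) *
        (q ^ 2 * x ^ 2 +
          (-r ^ 2 * q ^ 2 - q ^ 2 * f ^ 2 - r ^ 2 * c ^ 2 - p ^ 2 * f ^ 2
            + c ^ 2 * f ^ 2 + q ^ 4 - c ^ 2 * q ^ 2 - q ^ 2 * p ^ 2 + p ^ 2 * r ^ 2) * x +
          (r ^ 4 * c ^ 2 - r ^ 2 * c ^ 2 * p ^ 2 - f ^ 2 * r ^ 2 * c ^ 2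
            - p ^ 2 * f ^ 2 * c ^ 2 - p ^ 2 * f ^ 2 * r ^ 2 - c ^ 2 * q ^ 2 * r ^ 2
            - p ^ 2 * f ^ 2 * q ^ 2 + r ^ 2 * c ^ 4 + q ^ 2 * f ^ 2 * r ^ 2
            + p ^ 4 * f ^ 2 + p ^ 2 * f ^ 4 + q ^ 2 * c ^ 2 * p ^ 2))) :=
  cayley_menger_discriminant_factorization_general p q r s c f g h
end

section
/- Let positive reals satisfy the eight relations: c² = q² + p² - (q/s)(g² - p² - s²), f² = q² + r² - (q/s)(h² - r² - s²), c² = a² + b² - (a/d)(g² - b² - d²), f² = a² + e² - (a/d)(h² - e² - d²), b² = a² + c² + (a/q)(p² - q² - c²), e² = a² + f² + (a/q)(r² - q² - f²), b² = d² + g² + (d/s)(p² - s² - g²), e² = d² + h² + (d/s)(r² - s² - h²). Then s + q - a - d = 0. -/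
/-!
Clearing denominators in the four relations for `c²` and `b²` and combining them with weights
`-asd, qsd, qsd, asq` (as in the paper) kills every squared edge and leaves
`2sqad(s + q - a - d) = 0`; positivity of `s, q, a, d` then gives the claim.
-/

theorem mul_sum_eq_zero_of_cone_relations {K : Type*} [Field K]
    {a b c d g p q s : K} (hd : d ≠ 0) (hq : q ≠ 0) (hs : s ≠ 0)
    (h1 : c ^ 2 = q ^ 2 + p ^ 2 - (q / s) * (g ^ 2 - p ^ 2 - s ^ 2))
    (h3 : c ^ 2 = a ^ 2 + b ^ 2 - (a / d) * (g ^ 2 - b ^ 2 - d ^ 2))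
    (h5 : b ^ 2 = a ^ 2 + c ^ 2 + (a / q) * (p ^ 2 - q ^ 2 - c ^ 2))
    (h7 : b ^ 2 = d ^ 2 + g ^ 2 + (d / s) * (p ^ 2 - s ^ 2 - g ^ 2)) :
    2 * s * q * a * d * (s + q - a - d) = 0 := by
  linear_combination (norm := skip)
    (-(a * s * d)) * h1 + q * s * d * h3 + q * s * d * h5 + a * s * q * h7
  field_simp
  ring

theorem class_IIx_relations_force_zero_sum_general
    (a b c d g p q s : ℝ)
    (ha : 0 < a) (hd : 0 < d) (hq : 0 < q) (hs : 0 < s)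
    (h1 : c ^ 2 = q ^ 2 + p ^ 2 - (q / s) * (g ^ 2 - p ^ 2 - s ^ 2))
    (h3 : c ^ 2 = a ^ 2 + b ^ 2 - (a / d) * (g ^ 2 - b ^ 2 - d ^ 2))
    (h5 : b ^ 2 = a ^ 2 + c ^ 2 + (a / q) * (p ^ 2 - q ^ 2 - c ^ 2))
    (h7 : b ^ 2 = d ^ 2 + g ^ 2 + (d / s) * (p ^ 2 - s ^ 2 - g ^ 2)) :
    s + q - a - d = 0 := by
  have key := mul_sum_eq_zero_of_cone_relations hd.ne' hq.ne' hs.ne' h1 h3 h5 h7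
  have hne : (2 * s * q * a * d : ℝ) ≠ 0 := by positivity
  exact (mul_eq_zero.mp key).resolve_left hne

theorem class_IIx_relations_force_zero_sum
    (a b c d e f g h p q r s : ℝ)
    (ha : 0 < a) (hb : 0 < b) (hc : 0 < c) (hd : 0 < d) (he : 0 < e) (hf : 0 < f)
    (hg : 0 < g) (hh : 0 < h) (hp : 0 < p) (hq : 0 < q) (hr : 0 < r) (hs : 0 < s)
    (h1 : c ^ 2 = q ^ 2 + p ^ 2 - (q / s) * (g ^ 2 - p ^ 2 - s ^ 2))
    (h2 : f ^ 2 = q ^ 2 + r ^ 2 - (q / s) * (h ^ 2 - r ^ 2 - s ^ 2))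
    (h3 : c ^ 2 = a ^ 2 + b ^ 2 - (a / d) * (g ^ 2 - b ^ 2 - d ^ 2))
    (h4 : f ^ 2 = a ^ 2 + e ^ 2 - (a / d) * (h ^ 2 - e ^ 2 - d ^ 2))
    (h5 : b ^ 2 = a ^ 2 + c ^ 2 + (a / q) * (p ^ 2 - q ^ 2 - c ^ 2))
    (h6 : e ^ 2 = a ^ 2 + f ^ 2 + (a / q) * (r ^ 2 - q ^ 2 - f ^ 2))
    (h7 : b ^ 2 = d ^ 2 + g ^ 2 + (d / s) * (p ^ 2 - s ^ 2 - g ^ 2))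
    (h8 : e ^ 2 = d ^ 2 + h ^ 2 + (d / s) * (r ^ 2 - s ^ 2 - h ^ 2)) :
    s + q - a - d = 0 :=
  class_IIx_relations_force_zero_sum_general a b c d g p q s ha hd hq hs h1 h3 h5 h7
end

section
/- For positive reals p, q, r, s, a, b, c, d, e, f, g, h: if any three of the four conditions q·g·e = p·f·d, b·h·q = c·d·r, r·g·a = s·f·b, a·h·p = c·e·s hold, then the fourth one also holds. -/
theorem three_eqs_imply_fourth_of_mul_mul_eq {M : Type*} [MulZeroClass M] [IsCancelMulZero M]
    {x₁ x₂ x₃ x₄ y₁ y₂ y₃ y₄ : M} (hy₁ : y₁ ≠ 0) (hy₂ : y₂ ≠ 0) (hy₃ : y₃ ≠ 0) (hy₄ : y₄ ≠ 0)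
    (hbal : x₁ * x₄ * (y₂ * y₃) = y₁ * y₄ * (x₂ * x₃)) :
    (x₁ = y₁ ∧ x₂ = y₂ ∧ x₃ = y₃ → x₄ = y₄) ∧
    (x₁ = y₁ ∧ x₂ = y₂ ∧ x₄ = y₄ → x₃ = y₃) ∧
    (x₁ = y₁ ∧ x₃ = y₃ ∧ x₄ = y₄ → x₂ = y₂) ∧
    (x₂ = y₂ ∧ x₃ = y₃ ∧ x₄ = y₄ → x₁ = y₁) := by
  refine ⟨?_, ?_, ?_, ?_⟩
  · rintro ⟨rfl, rfl, rfl⟩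
    exact mul_left_cancel₀ hy₁ (mul_right_cancel₀ (mul_ne_zero hy₂ hy₃) hbal)
  · rintro ⟨rfl, rfl, rfl⟩
    exact (mul_left_cancel₀ hy₂ (mul_left_cancel₀ (mul_ne_zero hy₁ hy₄) hbal)).symm
  · rintro ⟨rfl, rfl, rfl⟩
    exact (mul_right_cancel₀ hy₃ (mul_left_cancel₀ (mul_ne_zero hy₁ hy₄) hbal)).symm
  · rintro ⟨rfl, rfl, rfl⟩
    exact mul_right_cancel₀ hy₄ (mul_right_cancel₀ (mul_ne_zero hy₂ hy₃) hbal)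

theorem three_proportionalities_imply_fourth_general
    (p q r s a b c d e f g h : ℝ)
    (hp : 0 < p) (hr : 0 < r) (hs : 0 < s)
    (hb : 0 < b) (hc : 0 < c) (hd : 0 < d)
    (he : 0 < e) (hf : 0 < f) :
    ((q * g * e = p * f * d ∧ b * h * q = c * d * r ∧ r * g * a = s * f * b) →
        a * h * p = c * e * s) ∧
    ((q * g * e = p * f * d ∧ b * h * q = c * d * r ∧ a * h * p = c * e * s) →
        r * g * a = s * f * b) ∧
    ((q * g * e = p * f * d ∧ r * g * a = s * f * b ∧ a * h * p = c * e * s) →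
        b * h * q = c * d * r) ∧
    ((b * h * q = c * d * r ∧ r * g * a = s * f * b ∧ a * h * p = c * e * s) →
        q * g * e = p * f * d) :=
  three_eqs_imply_fourth_of_mul_mul_eq
    (by positivity) (by positivity) (by positivity) (by positivity)
    -- both sides are the product of all twelve variables
    (by ring)

theorem three_proportionalities_imply_fourth
    (p q r s a b c d e f g h : ℝ)
    (hp : 0 < p) (hq : 0 < q) (hr : 0 < r) (hs : 0 < s)
    (ha : 0 < a) (hb : 0 < b) (hc : 0 < c) (hd : 0 < d)
    (he : 0 < e) (hf : 0 < f) (hg : 0 < g) (hh : 0 < h) :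
    ((q * g * e = p * f * d ∧ b * h * q = c * d * r ∧ r * g * a = s * f * b) →
        a * h * p = c * e * s) ∧
    ((q * g * e = p * f * d ∧ b * h * q = c * d * r ∧ a * h * p = c * e * s) →
        r * g * a = s * f * b) ∧
    ((q * g * e = p * f * d ∧ r * g * a = s * f * b ∧ a * h * p = c * e * s) →
        b * h * q = c * d * r) ∧
    ((b * h * q = c * d * r ∧ r * g * a = s * f * b ∧ a * h * p = c * e * s) →
        q * g * e = p * f * d) :=
  three_proportionalities_imply_fourth_general p q r s a b c d e f g h hp hr hs hb hc hd he hf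
end

section
/- With d, q, f, g, p, e defined by d = bh(a-s)/(bh-cr), q = cr(a-s)/(bh-cr), f = ra(c-h)/(ra-sb), g = sb(c-h)/(ra-sb), p = -cs(b-r)/(ah-cs), e = -ah(b-r)/(ah-cs), the expression c² - q² - p² + (pq/(sr))(h² - r² - s²) has numerator (after clearing denominators) equal, up to the nonzero factor c²(bh-cr)⁻²(ah-cs)⁻², to (bhs + ahr - crs - rsh)·B, where B = abc(h²+s²+r²) - hsr(a²+b²+c²) + (csb(h²+r²-s²) - hra(b²+c²-a²)) + (ahb(s²+r²-h²) - src(a²+b²-c²)) + (cra(s²+h²-r²) - shb(a²+c²-b²)). -/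
/-!
Clearing the denominators `bh - cr`, `ah - cs` and `sr` of `q`, `p` and `pq / (sr)` turns the
expression into a polynomial in `a, b, c, r, s, h`, and the claimed factorisation of that
polynomial is a ring identity.
-/

def B111 {R : Type*} [CommRing R] (a b c r s h : R) : R :=
  a * b * c * (h ^ 2 + s ^ 2 + r ^ 2) - h * s * r * (a ^ 2 + b ^ 2 + c ^ 2)
    + (c * s * b * (h ^ 2 + r ^ 2 - s ^ 2) - h * r * a * (b ^ 2 + c ^ 2 - a ^ 2))
    + (a * h * b * (s ^ 2 + r ^ 2 - h ^ 2) - s * r * c * (a ^ 2 + b ^ 2 - c ^ 2))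
    + (c * r * a * (s ^ 2 + h ^ 2 - r ^ 2) - s * h * b * (a ^ 2 + c ^ 2 - b ^ 2))

theorem mul_denominators_eq {K : Type*} [Field K] {c P Q D₁ D₂ t X : K}
    (hD₁ : D₁ ≠ 0) (hD₂ : D₂ ≠ 0) (ht : t ≠ 0) :
    (c ^ 2 - (Q / D₁) ^ 2 - (P / D₂) ^ 2 + (P / D₂ * (Q / D₁) / t) * X) * D₁ ^ 2 * D₂ ^ 2 * t =
      (c ^ 2 * D₁ ^ 2 * D₂ ^ 2 - Q ^ 2 * D₂ ^ 2 - P ^ 2 * D₁ ^ 2) * t + P * Q * D₁ * D₂ * X := by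
  field_simp

theorem numerator_eq_mul_B111 {R : Type*} [CommRing R] (a b c r s h : R) :
    (c ^ 2 * (b * h - c * r) ^ 2 * (a * h - c * s) ^ 2 - (c * r * (a - s)) ^ 2 * (a * h - c * s) ^ 2
        - (-(c * s * (b - r))) ^ 2 * (b * h - c * r) ^ 2) * (s * r)
      + -(c * s * (b - r)) * (c * r * (a - s)) * (b * h - c * r) * (a * h - c * s)
        * (h ^ 2 - r ^ 2 - s ^ 2) =
    -(s * r) * (c ^ 2 * (b * h * s + a * h * r - c * r * s - r * s * h) * B111 a b c r s h) := by
  unfold B111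
  ring

theorem numerator_identity_with_B111_general
    (a b c r s h q p B : ℝ)
    (hs : s ≠ 0) (hr : r ≠ 0)
    (h1 : b * h ≠ c * r) (h3 : a * h ≠ c * s)
    (hq : q = c * r * (a - s) / (b * h - c * r))
    (hp : p = -(c * s * (b - r)) / (a * h - c * s))
    (hB : B = a * b * c * (h ^ 2 + s ^ 2 + r ^ 2) - h * s * r * (a ^ 2 + b ^ 2 + c ^ 2)
      + (c * s * b * (h ^ 2 + r ^ 2 - s ^ 2) - h * r * a * (b ^ 2 + c ^ 2 - a ^ 2))
      + (a * h * b * (s ^ 2 + r ^ 2 - h ^ 2) - s * r * c * (a ^ 2 + b ^ 2 - c ^ 2))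
      + (c * r * a * (s ^ 2 + h ^ 2 - r ^ 2) - s * h * b * (a ^ 2 + c ^ 2 - b ^ 2))) :
    (c ^ 2 - q ^ 2 - p ^ 2 + (p * q / (s * r)) * (h ^ 2 - r ^ 2 - s ^ 2)) *
      (b * h - c * r) ^ 2 * (a * h - c * s) ^ 2 * (s * r) =
    -(s * r) * (c ^ 2 * (b * h * s + a * h * r - c * r * s - r * s * h) * B) := by
  have hB111 : B = B111 a b c r s h := hB
  subst hq hp hB111
  rw [mul_denominators_eq (sub_ne_zero.mpr h1) (sub_ne_zero.mpr h3) (mul_ne_zero hs hr)]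
  exact numerator_eq_mul_B111 a b c r s h

theorem numerator_identity_with_B111
    (a b c r s h d q f g p e B : ℝ)
    (hc : c ≠ 0) (hs : s ≠ 0) (hr : r ≠ 0)
    (h1 : b * h ≠ c * r) (h2 : r * a ≠ s * b) (h3 : a * h ≠ c * s)
    (hd : d = b * h * (a - s) / (b * h - c * r))
    (hq : q = c * r * (a - s) / (b * h - c * r))
    (hf : f = r * a * (c - h) / (r * a - s * b))
    (hg : g = s * b * (c - h) / (r * a - s * b))
    (hp : p = -(c * s * (b - r)) / (a * h - c * s))
    (he : e = -(a * h * (b - r)) / (a * h - c * s))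
    (hB : B = a * b * c * (h ^ 2 + s ^ 2 + r ^ 2) - h * s * r * (a ^ 2 + b ^ 2 + c ^ 2)
      + (c * s * b * (h ^ 2 + r ^ 2 - s ^ 2) - h * r * a * (b ^ 2 + c ^ 2 - a ^ 2))
      + (a * h * b * (s ^ 2 + r ^ 2 - h ^ 2) - s * r * c * (a ^ 2 + b ^ 2 - c ^ 2))
      + (c * r * a * (s ^ 2 + h ^ 2 - r ^ 2) - s * h * b * (a ^ 2 + c ^ 2 - b ^ 2))) :
    (c ^ 2 - q ^ 2 - p ^ 2 + (p * q / (s * r)) * (h ^ 2 - r ^ 2 - s ^ 2)) *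
      (b * h - c * r) ^ 2 * (a * h - c * s) ^ 2 * (s * r) =
    -(s * r) * (c ^ 2 * (b * h * s + a * h * r - c * r * s - r * s * h) * B) :=
  numerator_identity_with_B111_general a b c r s h q p B hs hr h1 h3 hq hp hB
end
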